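/- arXiv:math/0608158 — 6 statements merged into one kernel-verified Lean document; each statement's English description precedes it below -/
import Mathlib

section
/- With the notation of the construction of the extension from a homomorphism: let M ⊆ B × F be the submodule of pairs (b, Σ r_i e_i) such that Σ r_i a_i = 0 in A and qb = Σ r_i g̃(a_i) in B, and set Q = (B × F)/M. Then the map q₁: B → Q, b ↦ (b,0) + M is injective, the map q₂: Q → A, (b, Σ r_i e_i) + M ↦ Σ r_i a_i is a well-defined surjective O_X-module homomorphism, and the sequence 0 → B → Q → A → 0 is exact. -/
open Pointwise


/-- construction of the extension `0 → B → Q → A → 0` from a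
homomorphism `g : A → B/qB`, where `Q = (B × F)/M` with `F` free on the
generators of `A` and `M` the stated submodule of relations. -/
theorem extension_from_homomorphism
    {R : Type*} [CommRing R] {A B : Type*}
    [AddCommGroup A] [Module R A] [AddCommGroup B] [Module R B]
    (q : R) (hqR : q ∈ nonZeroDivisors R)
    (hqB : ∀ b : B, q • b = 0 → b = 0)
    (hqA : ∀ a : A, q • a = 0)
    {ι : Type*} (a : ι → A)
    (hgen : Submodule.span R (Set.range a) = ⊤)
    (g : A →ₗ[R] B ⧸ (Ideal.span {q} • (⊤ : Submodule R B)))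
    (gtilde : A → B)
    (hlift : ∀ x : A, (Submodule.Quotient.mk (gtilde x) :
        B ⧸ (Ideal.span {q} • (⊤ : Submodule R B))) = g x)
    (M : Submodule R (B × (ι →₀ R)))
    (hM : ∀ p : B × (ι →₀ R), p ∈ M ↔
      ((p.2.sum fun i c => c • a i) = 0 ∧
        q • p.1 = (p.2.sum fun i c => c • gtilde (a i)))) :
    ∃ q₂ : ((B × (ι →₀ R)) ⧸ M) →ₗ[R] A,
      (∀ p : B × (ι →₀ R), q₂ (Submodule.Quotient.mk p) =
          (p.2.sum fun i c => c • a i)) ∧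
      Function.Surjective q₂ ∧
      Function.Injective (M.mkQ.comp (LinearMap.inl R B (ι →₀ R))) ∧
      LinearMap.range (M.mkQ.comp (LinearMap.inl R B (ι →₀ R))) =
        LinearMap.ker q₂ := by
  classical
  let φ : (B × (ι →₀ R)) →ₗ[R] A :=
    (Finsupp.linearCombination R a).comp (LinearMap.snd R B (ι →₀ R))
  have hφ : ∀ p : B × (ι →₀ R), φ p = p.2.sum fun i c => c • a i := by
    intro p; simp [φ, Finsupp.linearCombination_apply]
  have hMle : M ≤ LinearMap.ker φ := by
    intro p hp; rw [LinearMap.mem_ker, hφ]; exact ((hM p).mp hp).1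
  have hφsurj : Function.Surjective φ := by
    intro x
    have hx : x ∈ Submodule.span R (Set.range a) := hgen ▸ Submodule.mem_top
    rw [← Finsupp.range_linearCombination] at hx
    obtain ⟨f, hf⟩ := hx
    exact ⟨(0, f), by simpa [φ] using hf⟩
  refine ⟨M.liftQ φ hMle, ?_, ?_, ?_, ?_⟩
  · intro p; rw [← hφ p]; rfl
  · intro x
    obtain ⟨p, hp⟩ := hφsurj x
    exact ⟨Submodule.Quotient.mk p, hp⟩
  · intro b₁ b₂ h
    have h' : ((b₁, 0) : B × (ι →₀ R)) - (b₂, 0) ∈ M :=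
      (Submodule.Quotient.eq M).mp h
    have := ((hM _).mp h').2
    simp only [Prod.snd_sub, sub_zero, Finsupp.sum_zero_index, Prod.fst_sub] at this
    have : b₁ - b₂ = 0 := hqB _ (by simpa using this)
    exact sub_eq_zero.mp this
  · apply le_antisymm
    · rintro _ ⟨b, rfl⟩
      rw [LinearMap.mem_ker]
      show M.liftQ φ hMle (Submodule.Quotient.mk (b, 0)) = 0
      rw [Submodule.liftQ_apply, hφ]
      simp
    · intro x hx
      obtain ⟨p, rfl⟩ := Submodule.mkQ_surjective M x
      have hx' : (p.2.sum fun i c => c • a i) = 0 := by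
        rw [LinearMap.mem_ker] at hx
        rw [← hφ p]
        exact hx
      -- show the element s lies in q • B
      set s : B := p.2.sum fun i c => c • gtilde (a i) with hs
      have hmk : (Submodule.Quotient.mk s :
          B ⧸ (Ideal.span {q} • (⊤ : Submodule R B))) = 0 := by
        have : (Submodule.Quotient.mk s :
            B ⧸ (Ideal.span {q} • (⊤ : Submodule R B))) =
            p.2.sum fun i c => c • g (a i) := by
          rw [hs]
          rw [← Submodule.mkQ_apply, map_finsuppSum]
          refine Finsupp.sum_congr fun i _ => ?_
          rw [map_smul, Submodule.mkQ_apply, hlift]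
        rw [this]
        have : (p.2.sum fun i c => c • g (a i)) = g (p.2.sum fun i c => c • a i) := by
          rw [map_finsuppSum]
          exact Finsupp.sum_congr fun i _ => (map_smul g _ _).symm
        rw [this, hx', map_zero]
      have hsN : s ∈ (Ideal.span {q} • (⊤ : Submodule R B)) :=
        (Submodule.Quotient.mk_eq_zero _).mp hmk
      rw [Submodule.ideal_span_singleton_smul] at hsN
      have hsN' : s ∈ q • ((⊤ : Submodule R B) : Set B) := by
        rw [← Submodule.coe_pointwise_smul]; exact hsN
      obtain ⟨c, -, hc⟩ := Set.mem_smul_set.mp hsN'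
      refine ⟨p.1 - c, ?_⟩
      show Submodule.Quotient.mk ((p.1 - c, 0) : B × (ι →₀ R)) = Submodule.Quotient.mk p
      rw [Submodule.Quotient.eq]
      rw [hM]
      have hsnd : ((p.1 - c, (0 : ι →₀ R)) - p).2 = -p.2 := by simp
      have hfst : ((p.1 - c, (0 : ι →₀ R)) - p).1 = -c := by
        simp only [Prod.fst_sub]; abel
      have hneg : ∀ y : B, ((-p.2).sum fun i c => c • y) = 0 ∨ True := fun _ => Or.inr trivial
      have hsum2 : ((-p.2).sum fun i c => c • gtilde (a i)) = -s := by
        rw [hs, Finsupp.sum_neg_index (fun i => by simp)]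
        simp [Finsupp.sum, ← Finset.sum_neg_distrib, neg_smul]
      have hsum1 : ((-p.2).sum fun i c => c • a i) = 0 := by
        have : ((-p.2).sum fun i c => c • a i) =
            Finsupp.linearCombination R a (-p.2) :=
          (Finsupp.linearCombination_apply R (-p.2)).symm
        rw [this, map_neg, Finsupp.linearCombination_apply, hx', neg_zero]
      constructor
      · rw [hsnd]; exact hsum1
      · rw [hsnd, hfst, hsum2, ← hc, smul_neg]
end

section
/- Let O_X be a commutative ring and I_D ⊆ O_X an ideal containing an O_X-regular element. Let ρ¹: R₁ → O_X[I_D^{-1}] be the ring homomorphism induced by the canonical surjection ρ: Sym_{O_X}(I_D^{-1}) → O_X[I_D^{-1}] (which kills i−1). Then ker ρ¹ = J₂, where J₂ = { u ∈ R₁ : there exists an O_X-regular element t ∈ O_X with tu = 0 in R₁ }. -/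
universe u

/-- With `R₁ = Sym_O(Iinv)/(i-1)` (encoded by its universal
property) and `ρ¹ : R₁ → O[Iinv] ⊆ K(X)` the algebra homomorphism induced by
the inclusion `Iinv ⊆ K(X)`, the kernel of `ρ¹` is
`J₂ = {u ∈ R₁ : ∃ O-regular t, t·u = 0}`. -/
theorem kernel_of_rho1
    {O : Type u} [CommRing O]
    (I : Ideal O) (q : O) (hqI : q ∈ I) (hq : q ∈ nonZeroDivisors O)
    (Iinv : Submodule O (FractionRing O))
    (hIinv : (Iinv : Set (FractionRing O)) =
      {f : FractionRing O | ∀ x ∈ I, ∃ y : O,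
        f * algebraMap O (FractionRing O) x = algebraMap O (FractionRing O) y})
    (hone : (1 : FractionRing O) ∈ Iinv)
    (R₁ : Type u) [CommRing R₁] [Algebra O R₁]
    (ι : Iinv →ₗ[O] R₁) (hι : ι ⟨1, hone⟩ = 1)
    (hUP : ∀ (S : Type u) [CommRing S] [Algebra O S] (f : Iinv →ₗ[O] S),
      f ⟨1, hone⟩ = 1 → ∃! φ : R₁ →ₐ[O] S, ∀ x : Iinv, φ (ι x) = f x)
    (ρ : R₁ →ₐ[O] FractionRing O)
    (hρ : ∀ x : Iinv, ρ (ι x) = (x : FractionRing O)) :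
    ∀ u : R₁, ρ u = 0 ↔ ∃ t ∈ nonZeroDivisors O, t • u = 0 := by
  -- Step 1: `q • ι x` lies in the image of `O` for every `x : Iinv`.
  have key : ∀ x : Iinv, ∃ y : O, q • ι x = algebraMap O R₁ y := by
    intro x
    have hx : (x : FractionRing O) ∈ (Iinv : Set (FractionRing O)) := x.2
    rw [hIinv] at hx
    obtain ⟨y, hy⟩ := hx q hqI
    refine ⟨y, ?_⟩
    have hsm : q • x = y • (⟨1, hone⟩ : Iinv) := by
      apply Subtype.ext
      show q • (x : FractionRing O) = y • (1 : FractionRing O)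
      rw [Algebra.smul_def, Algebra.smul_def, mul_one, mul_comm]
      exact hy
    calc q • ι x = ι (q • x) := (ι.map_smul q x).symm
      _ = ι (y • (⟨1, hone⟩ : Iinv)) := by rw [hsm]
      _ = y • ι ⟨1, hone⟩ := ι.map_smul y _
      _ = algebraMap O R₁ y := by rw [hι, Algebra.smul_def, mul_one]
  -- Step 2: `R₁` is generated by the image of `ι`.
  have htop : ∀ u : R₁, u ∈ Algebra.adjoin O (Set.range ι) := by
    intro u
    set A := Algebra.adjoin O (Set.range ι) with hA
    have hmem : ∀ x : Iinv, ι x ∈ A := fun x =>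
      Algebra.subset_adjoin ⟨x, rfl⟩
    let f : Iinv →ₗ[O] A :=
      { toFun := fun x => ⟨ι x, hmem x⟩
        map_add' := fun x y => by ext; simp
        map_smul' := fun c x => by ext; simp }
    have hf1 : f ⟨1, hone⟩ = 1 := by
      apply Subtype.ext; simp [f, hι]
    obtain ⟨φ, hφ, -⟩ := hUP A f hf1
    obtain ⟨ψ, -, huniq⟩ := hUP R₁ ι hι
    have h1 : A.val.comp φ = ψ := huniq _ (fun x => by
      simp only [AlgHom.coe_comp, Function.comp_apply, hφ x]; rfl)
    have h2 : AlgHom.id O R₁ = ψ := huniq _ (fun x => rfl)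
    have : A.val (φ u) = u := by
      rw [show A.val (φ u) = (A.val.comp φ) u from rfl, h1, ← h2]; rfl
    rw [← this]; exact (φ u).2
  -- Step 3: every `u` is killed into `O` by a power of `q`.
  have main : ∀ u : R₁, ∃ n : ℕ, ∃ a : O, q ^ n • u = algebraMap O R₁ a := by
    intro u
    induction htop u using Algebra.adjoin_induction with
    | mem x hx =>
      obtain ⟨x', rfl⟩ := hx
      obtain ⟨y, hy⟩ := key x'
      exact ⟨1, y, by rwa [pow_one]⟩
    | algebraMap r => exact ⟨0, r, by simp⟩
    | add x y hx hy ihx ihy =>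
      obtain ⟨n, a, ha⟩ := ihx
      obtain ⟨m, b, hb⟩ := ihy
      refine ⟨n + m, q ^ m * a + q ^ n * b, ?_⟩
      have hx2 : q ^ (n + m) • x = algebraMap O R₁ (q ^ m * a) := by
        rw [pow_add, mul_comm, mul_smul, ha, map_mul, map_pow, Algebra.smul_def, map_pow]
      have hy2 : q ^ (n + m) • y = algebraMap O R₁ (q ^ n * b) := by
        rw [pow_add, mul_smul, hb, map_mul, map_pow, Algebra.smul_def, map_pow]
      rw [smul_add, hx2, hy2, map_add]
    | mul x y hx hy ihx ihy =>
      obtain ⟨n, a, ha⟩ := ihx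
      obtain ⟨m, b, hb⟩ := ihy
      refine ⟨n + m, a * b, ?_⟩
      rw [map_mul, ← ha, ← hb, pow_add, Algebra.smul_def, Algebra.smul_def,
        Algebra.smul_def, map_mul]
      ring
  intro u
  constructor
  · intro hu
    obtain ⟨n, a, ha⟩ := main u
    have : algebraMap O (FractionRing O) a = 0 := by
      have := congrArg ρ ha
      rw [map_smul, hu, smul_zero, AlgHom.commutes] at this
      exact this.symm
    have ha0 : a = 0 := by
      exact IsFractionRing.injective O (FractionRing O) (by simpa using this)
    exact ⟨q ^ n, pow_mem hq n, by rw [ha, ha0, map_zero]⟩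
  · rintro ⟨t, ht, htu⟩
    have := congrArg ρ htu
    rw [map_smul, map_zero, Algebra.smul_def] at this
    have hunit : IsUnit (algebraMap O (FractionRing O) t) :=
      IsLocalization.map_units (FractionRing O) ⟨t, ht⟩
    exact (hunit.mul_right_eq_zero).mp this
end

section
/- Under the Kustin–Miller unprojection hypotheses: if u₁, …, u_r ∈ O_X satisfy Σ u_i f_i = 0, then Σ u_i g_i = 0, where g_i = s̃(f_i). Moreover, if h = a_n S^n + ⋯ + a₀ ∈ O_X[S] satisfies t·h ∈ (S f_i − g_i) for some element t ∈ O_X that is both O_X-regular and O_X/I_D-regular, then a_n ∈ I_D = (f₁,…,f_r). -/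
universe u

open CategoryTheory in
/-- Gorenstein local ring, via finiteness of the injective dimension of `R`
over itself (Baer-type criterion). -/
def IsGorensteinLocalRing (R : Type u) [CommRing R] : Prop :=
  IsLocalRing R ∧ IsNoetherianRing R ∧
    ∃ n : ℕ, ∀ I : Ideal R,
      Subsingleton (((Ext R (ModuleCat.{u} R) (n + 1)).obj
        (Opposite.op (ModuleCat.of R (R ⧸ I)))).obj (ModuleCat.of R R))

/-- The height (codimension) of an ideal. -/
noncomputable def idealHeight {R : Type u} [CommRing R] (I : Ideal R) : ℕ∞ :=
  ⨅ (p : PrimeSpectrum R) (_ : I ≤ p.asIdeal), Order.height p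

/-!
Writing `q = Σ p_j (f_j X - g_j)` as `q = A X - B` with `A = Σ p_j f_j` and `B = Σ p_j g_j`,
the coefficients of `A` and `B` are `Σ_j p_{j,k} f_j` and `Σ_j p_{j,k} g_j`, so every vanishing
coefficient of `A` forces the corresponding coefficient of `B` to vanish (the relations of the
`f_j` are relations of the `g_j = s̃(f_j)`). Comparing the coefficients of `A X - B` just above
the degree of `A` shows that `A` cannot reach the degree of `q`; hence the top coefficient
of `q` is a coefficient of `A X`, which lies in `I`. For `q = t h` one divides by `t` modulo `I`.
-/

open Polynomial

theorem Submodule.sum_smul_map_eq_zero {R M P ι : Type*} [CommRing R] [AddCommGroup M]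
    [Module R M] [AddCommGroup P] [Module R P] [Fintype ι] {N : Submodule R M}
    (φ : N →ₗ[R] P) (x : ι → N) (u : ι → R) (hu : ∑ i, u i • (x i : M) = 0) :
    ∑ i, u i • φ (x i) = 0 := by
  have hsum : ∑ i, u i • x i = 0 := Subtype.ext (by simpa using hu)
  simp_rw [← map_smul, ← map_sum, hsum, map_zero]

namespace Polynomial

variable {R : Type*} [CommRing R]

theorem coeff_eq_zero_of_natDegree_mul_X_sub_le {A B : R[X]}
    (hAB : ∀ k, A.coeff k = 0 → B.coeff k = 0) {n : ℕ} (hn : (A * X - B).natDegree ≤ n)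
    {k : ℕ} (hk : n ≤ k) : A.coeff k = 0 := by
  by_contra hAk
  have hkA : k ≤ A.natDegree := le_natDegree_of_ne_zero hAk
  have hB : B.coeff (A.natDegree + 1) = 0 :=
    hAB _ (coeff_eq_zero_of_natDegree_lt (Nat.lt_succ_self _))
  have htop : (A * X - B).coeff (A.natDegree + 1) = A.leadingCoeff := by
    rw [coeff_sub, coeff_mul_X, hB, sub_zero, leadingCoeff]
  rw [coeff_eq_zero_of_natDegree_lt (by omega), eq_comm, leadingCoeff_eq_zero] at htop
  exact hAk (by rw [htop, coeff_zero])

theorem coeff_mem_of_mem_span_C_mul_X_sub_C {ι : Type*} [Fintype ι] {I : Ideal R}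
    {f g : ι → R} (hf : ∀ i, f i ∈ I)
    (hrel : ∀ u : ι → R, ∑ i, u i * f i = 0 → ∑ i, u i * g i = 0) {q : R[X]}
    (hq : q ∈ Ideal.span (Set.range fun j => C (f j) * X - C (g j))) {n : ℕ}
    (hn : q.natDegree ≤ n) : q.coeff n ∈ I := by
  obtain ⟨p, rfl⟩ := (Submodule.mem_span_range_iff_exists_fun R[X]).mp hq
  set A := ∑ j, p j * C (f j)
  set B := ∑ j, p j * C (g j)
  have hsplit : ∑ j, p j • (C (f j) * X - C (g j)) = A * X - B := by
    simp only [A, B, smul_eq_mul, mul_sub, Finset.sum_sub_distrib, Finset.sum_mul, mul_assoc]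
  have hAB : ∀ k, A.coeff k = 0 → B.coeff k = 0 := fun k => by
    simpa only [A, B, finsetSum_coeff, coeff_mul_C] using hrel fun j => (p j).coeff k
  have hA : A * X ∈ I.map C :=
    Ideal.mul_mem_right _ _ <| Ideal.sum_mem _ fun j _ =>
      Ideal.mul_mem_left _ _ (Ideal.mem_map_of_mem _ (hf j))
  rw [hsplit] at hn ⊢
  rw [coeff_sub, hAB n (coeff_eq_zero_of_natDegree_mul_X_sub_le hAB hn le_rfl), sub_zero]
  exact Ideal.mem_map_C_iff.mp hA n

end Polynomial

theorem Ideal.mem_of_mul_mem_of_mk_mem_nonZeroDivisors {R : Type*} [CommRing R] {I : Ideal R}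
    {t a : R} (ht : Ideal.Quotient.mk I t ∈ nonZeroDivisors (R ⧸ I)) (hta : t * a ∈ I) :
    a ∈ I := by
  rw [← Ideal.Quotient.eq_zero_iff_mem, ← mul_right_mem_nonZeroDivisors_eq_zero_iff ht,
    ← map_mul, mul_comm, Ideal.Quotient.eq_zero_iff_mem]
  exact hta

theorem relations_and_induction_step_general
    {O : Type u} [CommRing O]
    {r : ℕ} (f : Fin r → O) (I : Ideal O) (hI : I = Ideal.span (Set.range f))
    (stilde : I →ₗ[O] O)
    (g : Fin r → O) (hg : ∀ j, g j = stilde ⟨f j, hI ▸ Ideal.subset_span ⟨j, rfl⟩⟩) :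
    (∀ u : Fin r → O, (∑ i, u i * f i) = 0 → (∑ i, u i * g i) = 0) ∧
    (∀ (h : Polynomial O) (t : O), t ∈ nonZeroDivisors O →
      Ideal.Quotient.mk I t ∈ nonZeroDivisors (O ⧸ I) →
      Polynomial.C t * h ∈ Ideal.span (Set.range fun j =>
        Polynomial.C (f j) * Polynomial.X - Polynomial.C (g j)) →
      h.leadingCoeff ∈ I) := by
  have hf : ∀ j, f j ∈ I := fun j => hI ▸ Ideal.subset_span ⟨j, rfl⟩
  have hrel : ∀ u : Fin r → O, ∑ i, u i * f i = 0 → ∑ i, u i * g i = 0 := fun u hu => by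
    simp only [hg, ← smul_eq_mul]
    exact Submodule.sum_smul_map_eq_zero stilde _ u hu
  refine ⟨hrel, fun h t _ htI hth => Ideal.mem_of_mul_mem_of_mk_mem_nonZeroDivisors htI ?_⟩
  simpa only [leadingCoeff, coeff_C_mul] using
    coeff_mem_of_mem_span_C_mul_X_sub_C hf hrel hth (natDegree_C_mul_le t h)

/-- under the Kustin--Miller hypotheses: (1) any relation
`Σ u_i f_i = 0` yields `Σ u_i g_i = 0`; (2) if `t` is both `O`- and
`O/I`-regular and `t·h ∈ (S f_i - g_i)`, then the leading coefficient of `h`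
lies in `I = (f_1, …, f_r)`. -/
theorem relations_and_induction_step
    {O : Type u} [CommRing O]
    (hGor : IsGorensteinLocalRing O)
    {r : ℕ} (f : Fin r → O) (I : Ideal O) (hI : I = Ideal.span (Set.range f))
    (hht : idealHeight I = 1)
    (hGorD : IsGorensteinLocalRing (O ⧸ I))
    (stilde : I →ₗ[O] O) (hinj : Function.Injective stilde)
    (g : Fin r → O) (hg : ∀ j, g j = stilde ⟨f j, hI ▸ Ideal.subset_span ⟨j, rfl⟩⟩) :
    (∀ u : Fin r → O, (∑ i, u i * f i) = 0 → (∑ i, u i * g i) = 0) ∧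
    (∀ (h : Polynomial O) (t : O), t ∈ nonZeroDivisors O →
      Ideal.Quotient.mk I t ∈ nonZeroDivisors (O ⧸ I) →
      Polynomial.C t * h ∈ Ideal.span (Set.range fun j =>
        Polynomial.C (f j) * Polynomial.X - Polynomial.C (g j)) →
      h.leadingCoeff ∈ I) :=
  relations_and_induction_step_general f I hI stilde g hg
end

section
/- Let O_X = k[x,y]/(x² − y³) and I_D = (x, y) ⊆ O_X (a Kustin–Miller unprojection pair), and let u = y²/x = x/y ∈ I_D^{-1} ⊆ K(X). Then u² − y = 0 in the subring O_X[I_D^{-1}] of the total quotient ring K(X), but u² − y is nonzero in the unprojection ring unpr_{O_X} I_D ≅ O_X[U]/(Ux − y², Uy − x). -/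
/-!
In `K(X)` the element `x` is invertible, and `u x = y²`, `x² = y³` give `(u² - y) x² = 0`,
so `u² = y`; invertibility of `x` comes from `x` being a non-zero-divisor modulo `x² - y³`.
In `O_X[U]/(Ux - y², Uy - x)`, on the other hand, reducing modulo the maximal ideal `(x, y)`
kills both relations but sends `U² - y` to `U² ≠ 0`.
-/

open scoped nonZeroDivisors

open Polynomial in
theorem Polynomial.dvd_of_dvd_mul_X {R : Type*} [CommRing R] {p f : R[X]}
    (hp : p.coeff 0 ∈ R⁰) (h : p ∣ f * X) : p ∣ f := by
  obtain ⟨g, hg⟩ := h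
  have hg0 : g.coeff 0 = 0 := by
    have h0 := congrArg (coeff · 0) hg
    simp only [mul_coeff_zero, coeff_X_zero, mul_zero] at h0
    exact (mul_left_mem_nonZeroDivisors_eq_zero_iff hp).mp h0.symm
  obtain ⟨q, rfl⟩ := X_dvd_iff.mpr hg0
  exact ⟨q, isRegular_X.right (by linear_combination hg)⟩

open MvPolynomial in
theorem MvPolynomial.X_sq_sub_X_pow_three_dvd_of_dvd_mul_X {R : Type*} [CommRing R]
    {f : MvPolynomial (Fin 2) R} (h : X 0 ^ 2 - X 1 ^ 3 ∣ f * X 0) :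
    X 0 ^ 2 - X 1 ^ 3 ∣ f := by
  -- Viewed as a polynomial in `X 0` over `R[X 1]`, the cusp equation has regular constant term.
  have he :
      finSuccEquiv R 1 (X 0 ^ 2 - X 1 ^ 3) = Polynomial.X ^ 2 - Polynomial.C (X 0 ^ 3) := by
    rw [map_sub, map_pow, map_pow, finSuccEquiv_X_zero, show (1 : Fin 2) = Fin.succ 0 from rfl,
      finSuccEquiv_X_succ, map_pow]
  have hreg : (finSuccEquiv R 1 (X 0 ^ 2 - X 1 ^ 3)).coeff 0 ∈ (MvPolynomial (Fin 1) R)⁰ := by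
    rw [he, Polynomial.coeff_sub, Polynomial.coeff_X_pow, Polynomial.coeff_C_zero,
      if_neg (by norm_num), zero_sub, neg_eq_neg_one_mul]
    exact mul_mem isUnit_neg_one.mem_nonZeroDivisors (isRegular_X_pow 3).mem_nonZeroDivisors
  have hdvd := Polynomial.dvd_of_dvd_mul_X hreg <| by
    simpa only [map_mul, finSuccEquiv_X_zero] using map_dvd (finSuccEquiv R 1) h
  simpa only [AlgEquiv.symm_apply_apply] using map_dvd (finSuccEquiv R 1).symm hdvd

theorem RingHom.apply_mem_nonZeroDivisors_of_ker_eq_span_singleton {R A : Type*} [CommRing R]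
    [CommRing A] {π : R →+* A} (hπ : Function.Surjective π) {p r : R}
    (hker : RingHom.ker π = Ideal.span {p}) (hr : ∀ f, p ∣ f * r → p ∣ f) : π r ∈ A⁰ := by
  rw [mem_nonZeroDivisors_iff_right]
  intro a ha
  obtain ⟨f, rfl⟩ := hπ a
  have hfr : f * r ∈ RingHom.ker π := by rwa [RingHom.mem_ker, map_mul]
  rw [hker, Ideal.mem_span_singleton] at hfr
  rw [← RingHom.mem_ker, hker, Ideal.mem_span_singleton]
  exact hr f hfr

theorem sq_eq_of_mul_eq_sq_of_sq_eq_pow_three {R : Type*} [CommRing R] {u x y : R}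
    (hx : x ∈ R⁰) (hu : u * x = y ^ 2) (hxy : x ^ 2 = y ^ 3) : u ^ 2 = y := by
  have h : (u ^ 2 - y) * x ^ 2 = 0 := by linear_combination (u * x + y ^ 2) * hu - y * hxy
  exact sub_eq_zero.mp ((mul_right_mem_nonZeroDivisors_eq_zero_iff (pow_mem hx 2)).mp h)

open Polynomial in
theorem Polynomial.X_sq_sub_C_notMem_span {A B : Type*} [CommRing A] [CommRing B] [Nontrivial B]
    (ψ : A →+* B) {a b : A} (ha : ψ a = 0) (hb : ψ b = 0) :
    X ^ 2 - C b ∉ Ideal.span {C a * X - C (b ^ 2), C b * X - C a} := by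
  intro h
  have hle : Ideal.span {C a * X - C (b ^ 2), C b * X - C a} ≤ RingHom.ker (mapRingHom ψ) := by
    rw [Ideal.span_le, Set.insert_subset_iff, Set.singleton_subset_iff]
    simp [ha, hb]
  have hX : X ^ 2 = (0 : B[X]) := by simpa [hb] using hle h
  exact (monic_X_pow 2).ne_zero hX

/-- for the Kustin--Miller pair `I_D = (x,y) ⊆ O_X = k[x,y]/(x²-y³)`
and `u = y²/x = x/y ∈ I_D⁻¹`, the element `u² - y` vanishes in
`O_X[I_D⁻¹] ⊆ K(X)` but is nonzero in the unprojection ring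
`unpr_{O_X} I_D ≅ O_X[U]/(Ux - y², Uy - x)`. -/
theorem cusp_example
    (k : Type*) [Field k] :
    ∀ (A : Type) (_ : CommRing A) (π : MvPolynomial (Fin 2) k →+* A),
      Function.Surjective π →
      RingHom.ker π = Ideal.span {MvPolynomial.X 0 ^ 2 - MvPolynomial.X 1 ^ 3} →
      (∀ u : FractionRing A,
          u * algebraMap A (FractionRing A) (π (MvPolynomial.X 0)) =
            algebraMap A (FractionRing A) (π (MvPolynomial.X 1) ^ 2) →
          u ^ 2 = algebraMap A (FractionRing A) (π (MvPolynomial.X 1))) ∧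
      ((Ideal.Quotient.mk (Ideal.span
            ({Polynomial.C (π (MvPolynomial.X 0)) * Polynomial.X -
                Polynomial.C (π (MvPolynomial.X 1) ^ 2),
              Polynomial.C (π (MvPolynomial.X 1)) * Polynomial.X -
                Polynomial.C (π (MvPolynomial.X 0))} : Set (Polynomial A))))
          (Polynomial.X ^ 2 - Polynomial.C (π (MvPolynomial.X 1))) ≠ 0) := by
  intro A _ π hπ hker
  have hxy : π (MvPolynomial.X 0) ^ 2 = π (MvPolynomial.X 1) ^ 3 := by
    rw [← sub_eq_zero, ← map_pow, ← map_pow, ← map_sub, ← RingHom.mem_ker, hker]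
    exact Ideal.mem_span_singleton_self _
  have hx : π (MvPolynomial.X 0) ∈ A⁰ :=
    π.apply_mem_nonZeroDivisors_of_ker_eq_span_singleton hπ hker
      fun _ ↦ MvPolynomial.X_sq_sub_X_pow_three_dvd_of_dvd_mul_X
  have hker0 : RingHom.ker π ≤ RingHom.ker (MvPolynomial.eval (0 : Fin 2 → k)) := by
    rw [hker, Ideal.span_le, Set.singleton_subset_iff]
    simp
  set ψ := π.liftOfSurjective hπ ⟨MvPolynomial.eval 0, hker0⟩
  have hψ (i : Fin 2) : ψ (π (MvPolynomial.X i)) = 0 := by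
    rw [RingHom.liftOfSurjective_comp_apply]
    simp
  refine ⟨fun u hu ↦ ?_, ?_⟩
  · exact sq_eq_of_mul_eq_sq_of_sq_eq_pow_three
      (IsLocalization.map_units (FractionRing A) (⟨_, hx⟩ : A⁰)).mem_nonZeroDivisors
      (by rw [hu, map_pow]) (by rw [← map_pow, hxy, map_pow])
  · rw [Ne, Ideal.Quotient.eq_zero_iff_mem]
    exact Polynomial.X_sq_sub_C_notMem_span ψ (hψ 0) (hψ 1)
end

section
/- Let k be a field and let O_X ⊆ k[v,w] be the k-subalgebra generated by the monomials vw, vw², vw³, vw⁴, v³w². Then O_X is isomorphic to K[Y,Z,T,U₁,U₂]/I, where Y,Z,T,U₁,U₂ have degrees 2,3,4,5,5 and I = (Z² − YT, ZT − YU₁, Y⁴ − ZU₂, T² − ZU₁, Y³Z − TU₂, Y³T − U₁U₂), via Y ↦ vw, Z ↦ vw², T ↦ vw³, U₁ ↦ vw⁴, U₂ ↦ v³w². -/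
/-!
The map sends each monomial `X^m` to the monomial `v^P(m) w^Q(m)`, so its kernel is spanned by
the binomials `X^m - X^m'` with `(P, Q)(m) = (P, Q)(m')`. Reading the six generators of `I` as
rewriting rules `X^l → X^r` on monomials, every rule lowers `3 deg_Y + 4 deg_Z + 3 deg_T`, so each
monomial is congruent modulo `I` to an irreducible one; and `(P, Q)` is injective on irreducible
exponents. Hence any two monomials in the same fibre are congruent modulo `I`.
-/

open MvPolynomial Finsupp

namespace MvPolynomial

variable {σ τ R : Type*} [CommRing R]

theorem aeval_monomial_one_monomial (e : σ → τ →₀ ℕ) (m : σ →₀ ℕ) (c : R) :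
    aeval (fun i => monomial (e i) (1 : R)) (monomial m c) = monomial (weight e m) c := by
  rw [aeval_monomial, weight_apply, monomial_finsupp_sum_index]
  simp [monomial_pow, algebraMap_eq]

theorem ker_aeval_monomial_le {e : σ → τ →₀ ℕ} {I : Ideal (MvPolynomial σ R)}
    (hI : ∀ m m', weight e m = weight e m' → monomial m (1 : R) - monomial m' 1 ∈ I) :
    RingHom.ker (aeval fun i => monomial (e i) (1 : R)) ≤ I := by
  set r := Function.invFun (weight e : (σ →₀ ℕ) →+ τ →₀ ℕ)
  have hsub (f : MvPolynomial σ R) :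
      f - AddMonoidAlgebra.mapDomain r (aeval (fun i => monomial (e i) (1 : R)) f) ∈ I := by
    induction f using MvPolynomial.induction_on' with
    | monomial m c =>
      rw [aeval_monomial_one_monomial, ← single_eq_monomial (weight e m),
        AddMonoidAlgebra.mapDomain_single, single_eq_monomial]
      have := I.mul_mem_left (C c) (hI _ _ (Function.invFun_eq ⟨m, rfl⟩).symm)
      rwa [mul_sub, C_mul_monomial, C_mul_monomial, mul_one] at this
    | add p q hp hq =>
      rw [map_add, AddMonoidAlgebra.mapDomain_add, add_sub_add_comm]
      exact I.add_mem hp hq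
  intro f hf
  have := hsub f
  rwa [(RingHom.mem_ker).1 hf, AddMonoidAlgebra.mapDomain_zero, sub_zero] at this

theorem binomial_mem_of_injOn [Nontrivial R] {e : σ → τ →₀ ℕ} {I : Ideal (MvPolynomial σ R)}
    (hIker : I ≤ RingHom.ker (aeval fun i => monomial (e i) (1 : R)))
    {N : Set (σ →₀ ℕ)} (hN : N.InjOn (weight e))
    (hnf : ∀ m, ∃ n ∈ N, monomial m (1 : R) - monomial n 1 ∈ I) (m m' : σ →₀ ℕ)
    (h : weight e m = weight e m') : monomial m (1 : R) - monomial m' 1 ∈ I := by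
  have weight_eq {m n} (hmn : monomial m (1 : R) - monomial n 1 ∈ I) : weight e m = weight e n := by
    have := hIker hmn
    rw [RingHom.mem_ker, map_sub, sub_eq_zero, aeval_monomial_one_monomial,
      aeval_monomial_one_monomial] at this
    exact monomial_left_injective one_ne_zero this
  obtain ⟨n, hn, hmn⟩ := hnf m
  obtain ⟨n', hn', hmn'⟩ := hnf m'
  have : n = n' := hN hn hn' ((weight_eq hmn).symm.trans (h.trans (weight_eq hmn')))
  subst this
  simpa using I.sub_mem hmn hmn'

theorem monomial_sub_monomial_mem_of_le {I : Ideal (MvPolynomial σ R)} {l r m : σ →₀ ℕ}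
    (hI : monomial l (1 : R) - monomial r 1 ∈ I) (hlm : l ≤ m) :
    monomial m (1 : R) - monomial (m - l + r) 1 ∈ I := by
  have : monomial m (1 : R) - monomial (m - l + r) 1 =
      monomial (m - l) 1 * (monomial l 1 - monomial r 1) := by
    rw [mul_sub, monomial_mul, monomial_mul, mul_one, tsub_add_cancel_of_le hlm]
  exact this ▸ I.mul_mem_left _ hI

theorem exists_irreducible_sub_mem {I : Ideal (MvPolynomial σ R)}
    {rules : Set ((σ →₀ ℕ) × (σ →₀ ℕ))} {w : σ → ℕ}
    (hI : ∀ p ∈ rules, monomial p.1 (1 : R) - monomial p.2 1 ∈ I)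
    (hw : ∀ p ∈ rules, weight w p.2 < weight w p.1) (m : σ →₀ ℕ) :
    ∃ n ∈ {n | ∀ p ∈ rules, ¬ p.1 ≤ n}, monomial m (1 : R) - monomial n 1 ∈ I := by
  induction h : weight w m using Nat.strong_induction_on generalizing m with
  | _ k ih =>
  by_cases hred : ∃ p ∈ rules, p.1 ≤ m
  · obtain ⟨⟨l, r⟩, hp, hlm⟩ := hred
    have hlt : weight w (m - l + r) < k := by
      have := hw _ hp
      dsimp only at this
      have := congrArg (weight w) (tsub_add_cancel_of_le hlm)
      simp only [map_add] at this ⊢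
      omega
    obtain ⟨n, hn, hmn⟩ := ih _ hlt _ rfl
    refine ⟨n, hn, ?_⟩
    simpa using I.add_mem (monomial_sub_monomial_mem_of_le (hI _ hp) hlm) hmn
  · exact ⟨m, fun p hp hle => hred ⟨p, hp, hle⟩, by simp⟩

end MvPolynomial

theorem Finsupp.single_add_single_le_iff {ι : Type*} {i j : ι} (hij : i ≠ j) {a b : ℕ}
    {n : ι →₀ ℕ} : single i a + single j b ≤ n ↔ a ≤ n i ∧ b ≤ n j := by
  refine ⟨fun h => ⟨by simpa [hij] using h i, by simpa [hij.symm] using h j⟩, fun ⟨ha, hb⟩ x => ?_⟩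
  rcases eq_or_ne x i with rfl | hxi
  · simpa [hij] using ha
  · rcases eq_or_ne x j with rfl | hxj
    · simpa [hxi] using hb
    · simp [hxi.symm, hxj.symm]

namespace ReidSuzuki

noncomputable def generators (k : Type*) [CommRing k] : Fin 5 → MvPolynomial (Fin 2) k :=
  ![X 0 * X 1, X 0 * X 1 ^ 2, X 0 * X 1 ^ 3, X 0 * X 1 ^ 4, X 0 ^ 3 * X 1 ^ 2]

noncomputable def exponent : Fin 5 → Fin 2 →₀ ℕ :=
  ![single 0 1 + single 1 1, single 0 1 + single 1 2, single 0 1 + single 1 3,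
    single 0 1 + single 1 4, single 0 3 + single 1 2]

theorem generators_eq_monomial (k : Type*) [CommRing k] :
    generators k = fun i => monomial (exponent i) 1 := by
  funext i
  fin_cases i <;> simp [generators, exponent, monomial_single_add, ← X_pow_eq_monomial]

noncomputable def ideal (k : Type*) [CommRing k] : Ideal (MvPolynomial (Fin 5) k) :=
  Ideal.span {X 1 ^ 2 - X 0 * X 2,
    X 1 * X 2 - X 0 * X 3,
    X 0 ^ 4 - X 1 * X 4,
    X 2 ^ 2 - X 1 * X 3,
    X 0 ^ 3 * X 1 - X 2 * X 4,
    X 0 ^ 3 * X 2 - X 3 * X 4}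

theorem ideal_le_ker (k : Type*) [CommRing k] :
    ideal k ≤ RingHom.ker (aeval (generators k)) := by
  rw [ideal, Ideal.span_le]
  rintro x hx
  simp only [Set.mem_insert_iff, Set.mem_singleton_iff] at hx
  rcases hx with rfl | rfl | rfl | rfl | rfl | rfl <;>
    · simp only [SetLike.mem_coe, RingHom.mem_ker, map_sub, map_mul, map_pow, aeval_X,
        generators, Matrix.cons_val_zero, Matrix.cons_val_one, Matrix.cons_val_two,
        Matrix.cons_val_three, Matrix.cons_val_four, Matrix.head_cons, Matrix.tail_cons]
      ring

noncomputable def rules : Set ((Fin 5 →₀ ℕ) × (Fin 5 →₀ ℕ)) :=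
  {(single 1 2, single 0 1 + single 2 1), (single 1 1 + single 2 1, single 0 1 + single 3 1),
    (single 0 4, single 1 1 + single 4 1), (single 2 2, single 1 1 + single 3 1),
    (single 0 3 + single 1 1, single 2 1 + single 4 1),
    (single 0 3 + single 2 1, single 3 1 + single 4 1)}

theorem binomial_mem_ideal (k : Type*) [CommRing k] :
    ∀ p ∈ rules, monomial p.1 (1 : k) - monomial p.2 1 ∈ ideal k := by
  simp only [rules, Set.mem_insert_iff, Set.mem_singleton_iff]
  rintro p (rfl | rfl | rfl | rfl | rfl | rfl) <;>
    · simp only [monomial_single_add, ← X_pow_eq_monomial, pow_one]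
      exact Ideal.subset_span (by simp)

theorem weight_snd_lt_weight_fst :
    ∀ p ∈ rules, weight ![3, 4, 3, 0, 0] p.2 < weight ![3, 4, 3, 0, 0] p.1 := by
  simp [rules, weight_eq_sum, Fin.sum_univ_five]

theorem weight_exponent_zero (n : Fin 5 →₀ ℕ) :
    weight exponent n 0 = n 0 + n 1 + n 2 + n 3 + 3 * n 4 := by
  simp [weight_eq_sum, Fin.sum_univ_five, exponent, mul_comm]

theorem weight_exponent_one (n : Fin 5 →₀ ℕ) :
    weight exponent n 1 = n 0 + 2 * n 1 + 3 * n 2 + 4 * n 3 + 2 * n 4 := by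
  simp [weight_eq_sum, Fin.sum_univ_five, exponent, mul_comm]

theorem bounds_of_irreducible {n : Fin 5 →₀ ℕ} (hn : ∀ p ∈ rules, ¬ p.1 ≤ n) :
    n 0 < 4 ∧ n 1 < 2 ∧ n 2 < 2 ∧ (n 1 = 0 ∨ n 2 = 0) ∧ (n 0 < 3 ∨ n 1 = 0 ∧ n 2 = 0) := by
  simp only [rules, Set.mem_insert_iff, Set.mem_singleton_iff, forall_eq_or_imp, forall_eq,
    single_le_iff, single_add_single_le_iff, ne_eq, Fin.reduceEq, not_false_eq_true] at hn
  omega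

theorem injOn_weight_exponent : {n | ∀ p ∈ rules, ¬ p.1 ≤ n}.InjOn (weight exponent) := by
  intro n hn n' hn' h
  have hP := DFunLike.congr_fun h 0
  have hQ := DFunLike.congr_fun h 1
  rw [weight_exponent_zero, weight_exponent_zero] at hP
  rw [weight_exponent_one, weight_exponent_one] at hQ
  have hn := bounds_of_irreducible hn
  have hn' := bounds_of_irreducible hn'
  -- `4P - Q = (3 n₀ + 2 n₁ + n₂) + 10 n₄`, and `3 n₀ + 2 n₁ + n₂` takes each value in `0, …, 9`
  -- exactly once on irreducible exponents
  have h4PQ : 3 * n 0 + 2 * n 1 + n 2 + 10 * n 4 = 3 * n' 0 + 2 * n' 1 + n' 2 + 10 * n' 4 := by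
    omega
  have h4 : n 4 = n' 4 := by omega
  have h12 : 2 * n 1 + n 2 = 2 * n' 1 + n' 2 := by omega
  ext i
  fin_cases i <;> simp only [Fin.zero_eta, Fin.mk_one, Fin.reduceFinMk] <;> omega

end ReidSuzuki

open ReidSuzuki in
/-- the subring of `k[v,w]` generated by `vw, vw², vw³, vw⁴, v³w²`
is `K[Y,Z,T,U₁,U₂]/I`: i.e. the kernel of the map `K[Y,Z,T,U₁,U₂] → k[v,w]`,
`Y,Z,T,U₁,U₂ ↦ vw, vw², vw³, vw⁴, v³w²`, is the stated ideal `I`.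
(Variables: `0 = Y, 1 = Z, 2 = T, 3 = U₁, 4 = U₂`; `v = X 0`, `w = X 1`.) -/
theorem reid_suzuki_OX_presentation
    (k : Type*) [Field k] :
    RingHom.ker ((aeval (fun j : Fin 5 =>
        (![X 0 * X 1, X 0 * X 1 ^ 2, X 0 * X 1 ^ 3, X 0 * X 1 ^ 4,
            X 0 ^ 3 * X 1 ^ 2] : Fin 5 → MvPolynomial (Fin 2) k) j) :
          MvPolynomial (Fin 5) k →ₐ[k] MvPolynomial (Fin 2) k).toRingHom) =
      Ideal.span {X 1 ^ 2 - X 0 * X 2,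
        X 1 * X 2 - X 0 * X 3,
        X 0 ^ 4 - X 1 * X 4,
        X 2 ^ 2 - X 1 * X 3,
        X 0 ^ 3 * X 1 - X 2 * X 4,
        X 0 ^ 3 * X 2 - X 3 * X 4} := by
  show RingHom.ker (aeval (generators k)) = ideal k
  have hle := ideal_le_ker k
  rw [generators_eq_monomial] at hle ⊢
  exact le_antisymm (ker_aeval_monomial_le (binomial_mem_of_injOn hle injOn_weight_exponent
    (exists_irreducible_sub_mem (binomial_mem_ideal k) weight_snd_lt_weight_fst))) hle
end

section
/- Let O_X = K[Y,Z,T,U₁,U₂]/I where I = (Z²−YT, ZT−YU₁, Y⁴−ZU₂, T²−ZU₁, Y³Z−TU₂, Y³T−U₁U₂), and let I_D = (z²−y³, t−y², u₁−yz, u₂−yz) ⊆ O_X (lowercase letters denoting images of the variables). Then I_D is a prime ideal of O_X; it is the ideal of the point [1,1,1,1,1] of Proj O_X ⊆ P(2,3,4,5,5). -/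
/-!
Let `J = (z² - y³, t - y², u₁ - yz, u₂ - yz) ⊆ K[Y,Z,T,U₁,U₂]`. It is the kernel of the
parametrisation `(Y,Z,T,U₁,U₂) ↦ (s², s³, s⁴, s⁵, s⁵)` of a monomial curve, hence prime: modulo
`J` every polynomial is `P(y) + Q(y) z`, whose image `P(s²) + Q(s²) s³` splits into even and odd
powers of `s`, so it vanishes only when `P = Q = 0`. The six equations of `O_X` vanish on the
curve, so `J` contains `I`, and `I_D` is the image of `J` in `O_X`.
-/

open MvPolynomial

namespace Polynomial

variable {R : Type*} [CommSemiring R]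

theorem eq_zero_of_expand_two_add_expand_two_mul_X_pow_eq_zero {P Q : R[X]} {n : ℕ} (hn : Odd n)
    (h : expand R 2 P + expand R 2 Q * X ^ n = 0) : P = 0 ∧ Q = 0 := by
  obtain ⟨m, rfl⟩ := hn
  have hP : P = 0 := by
    ext k
    have hk := congrArg (coeff · (2 * k)) h
    simp only [coeff_add, coeff_zero, coeff_mul_X_pow', coeff_expand two_pos,
      dvd_mul_right, if_true, Nat.mul_div_cancel_left k two_pos] at hk
    split_ifs at hk with hle hodd
    · omega
    · simpa using hk
    · simpa using hk
  refine ⟨hP, ?_⟩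
  rw [hP, map_zero, zero_add] at h
  exact (expand_eq_zero two_pos).mp (mul_X_pow_eq_zero h)

end Polynomial

namespace ReidSuzuki

theorem exists_eq_aeval_add_aeval_mul {K A : Type*} [CommSemiring K] [CommRing A] [Algebra K A]
    (g : MvPolynomial (Fin 5) K →ₐ[K] A) (hZ : g (X 1) ^ 2 = g (X 0) ^ 3)
    (hT : g (X 2) = g (X 0) ^ 2) (hU₁ : g (X 3) = g (X 0) * g (X 1))
    (hU₂ : g (X 4) = g (X 0) * g (X 1)) (f : MvPolynomial (Fin 5) K) :
    ∃ P Q : Polynomial K,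
      g f = Polynomial.aeval (g (X 0)) P + Polynomial.aeval (g (X 0)) Q * g (X 1) := by
  induction f using MvPolynomial.induction_on with
  | C a => exact ⟨Polynomial.C a, 0, by simp⟩
  | add p q hp hq =>
    obtain ⟨P₁, Q₁, h₁⟩ := hp
    obtain ⟨P₂, Q₂, h₂⟩ := hq
    exact ⟨P₁ + P₂, Q₁ + Q₂, by rw [map_add, h₁, h₂]; simp only [map_add]; ring⟩
  | mul_X p i hp =>
    obtain ⟨P, Q, h⟩ := hp
    rw [map_mul, h]
    set y := g (X 0)
    fin_cases i <;> simp only [Fin.zero_eta, Fin.mk_one, Fin.reduceFinMk]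
    · exact ⟨.X * P, .X * Q, by simp only [map_mul, Polynomial.aeval_X]; ring⟩
    · exact ⟨.X ^ 3 * Q, P, by
        simp only [map_mul, map_pow, Polynomial.aeval_X]
        linear_combination Polynomial.aeval y Q * hZ⟩
    · exact ⟨.X ^ 2 * P, .X ^ 2 * Q, by
        simp only [map_mul, map_pow, Polynomial.aeval_X, hT]; ring⟩
    · exact ⟨.X ^ 4 * Q, .X * P, by
        simp only [map_mul, map_pow, Polynomial.aeval_X, hU₁]
        linear_combination y * Polynomial.aeval y Q * hZ⟩
    · exact ⟨.X ^ 4 * Q, .X * P, by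
        simp only [map_mul, map_pow, Polynomial.aeval_X, hU₂]
        linear_combination y * Polynomial.aeval y Q * hZ⟩

variable (K : Type*) [CommRing K]

-- `X 0, …, X 4` stand for `Y, Z, T, U₁, U₂`.
noncomputable def curveParam : MvPolynomial (Fin 5) K →ₐ[K] Polynomial K :=
  aeval ![.X ^ 2, .X ^ 3, .X ^ 4, .X ^ 5, .X ^ 5]

noncomputable def curveIdeal : Ideal (MvPolynomial (Fin 5) K) :=
  Ideal.span {X 1 ^ 2 - X 0 ^ 3, X 2 - X 0 ^ 2, X 3 - X 0 * X 1, X 4 - X 0 * X 1}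

theorem curveIdeal_le_ker : curveIdeal K ≤ RingHom.ker (curveParam K) := by
  simp [curveIdeal, Ideal.span_le, Set.insert_subset_iff, curveParam, ← pow_mul, ← pow_add]

theorem span_equations_le_ker : Ideal.span {X 1 ^ 2 - X 0 * X 2, X 1 * X 2 - X 0 * X 3,
      X 0 ^ 4 - X 1 * X 4, X 2 ^ 2 - X 1 * X 3, X 0 ^ 3 * X 1 - X 2 * X 4,
      X 0 ^ 3 * X 2 - X 3 * X 4} ≤ RingHom.ker (curveParam K) := by
  simp [Ideal.span_le, Set.insert_subset_iff, curveParam, ← pow_mul, ← pow_add]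

theorem curveParam_aeval_X_zero (P : Polynomial K) :
    curveParam K (Polynomial.aeval (X 0) P) = Polynomial.expand K 2 P := by
  rw [← Polynomial.aeval_algHom_apply, ← Polynomial.aeval_X_left_apply (Polynomial.expand K 2 P),
    Polynomial.expand_aeval]
  simp [curveParam]

theorem ker_curveParam : RingHom.ker (curveParam K) = curveIdeal K := by
  refine le_antisymm (fun f hf => ?_) (curveIdeal_le_ker K)
  set g := Ideal.Quotient.mkₐ K (curveIdeal K)
  have hrel : ∀ p q, p - q ∈ curveIdeal K → g p = g q := fun p q h =>
    (Ideal.Quotient.mk_eq_mk_iff_sub_mem p q).mpr h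
  obtain ⟨P, Q, hf_normal⟩ := exists_eq_aeval_add_aeval_mul g
    (by rw [← map_pow, ← map_pow]; exact hrel _ _ (Ideal.subset_span (by simp)))
    (by rw [← map_pow]; exact hrel _ _ (Ideal.subset_span (by simp)))
    (by rw [← map_mul]; exact hrel _ _ (Ideal.subset_span (by simp)))
    (by rw [← map_mul]; exact hrel _ _ (Ideal.subset_span (by simp))) f
  rw [Polynomial.aeval_algHom_apply, Polynomial.aeval_algHom_apply, ← map_mul, ← map_add]
    at hf_normal
  have hdiff := (Ideal.Quotient.mk_eq_mk_iff_sub_mem _ _).mp hf_normal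
  have hφ : curveParam K (Polynomial.aeval (X 0) P + Polynomial.aeval (X 0) Q * X 1) = 0 := by
    have := curveIdeal_le_ker K hdiff
    rwa [RingHom.mem_ker, map_sub, hf, zero_sub, neg_eq_zero] at this
  have hPQ : Polynomial.expand K 2 P + Polynomial.expand K 2 Q * .X ^ 3 = 0 := by
    rwa [map_add, map_mul, curveParam_aeval_X_zero, curveParam_aeval_X_zero, curveParam, aeval_X]
      at hφ
  obtain ⟨rfl, rfl⟩ := Polynomial.eq_zero_of_expand_two_add_expand_two_mul_X_pow_eq_zero
    (by decide) hPQ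
  simpa using hdiff

end ReidSuzuki

/-- in the Reid--Suzuki ring
`O_X = K[Y,Z,T,U₁,U₂]/(Z²-YT, ZT-YU₁, Y⁴-ZU₂, T²-ZU₁, Y³Z-TU₂, Y³T-U₁U₂)`,
the ideal `I_D = (z²-y³, t-y², u₁-yz, u₂-yz)` is prime (it is the ideal of the
point `[1,1,1,1,1]` of `Proj O_X ⊆ P(2,3,4,5,5)`).
(Variables: `0 = Y, 1 = Z, 2 = T, 3 = U₁, 4 = U₂`.) -/
theorem reid_suzuki_ID_prime
    (K : Type*) [Field K]
    (I : Ideal (MvPolynomial (Fin 5) K))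
    (hI : I = Ideal.span {X 1 ^ 2 - X 0 * X 2, X 1 * X 2 - X 0 * X 3,
      X 0 ^ 4 - X 1 * X 4, X 2 ^ 2 - X 1 * X 3,
      X 0 ^ 3 * X 1 - X 2 * X 4, X 0 ^ 3 * X 2 - X 3 * X 4})
    (ID : Ideal (MvPolynomial (Fin 5) K ⧸ I))
    (hID : ID = Ideal.span {Ideal.Quotient.mk I (X 1 ^ 2 - X 0 ^ 3),
      Ideal.Quotient.mk I (X 2 - X 0 ^ 2),
      Ideal.Quotient.mk I (X 3 - X 0 * X 1),
      Ideal.Quotient.mk I (X 4 - X 0 * X 1)}) :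
    ID.IsPrime := by
  have hI_le : I ≤ ReidSuzuki.curveIdeal K :=
    hI ▸ ReidSuzuki.ker_curveParam K ▸ ReidSuzuki.span_equations_le_ker K
  have hID_map : ID = (ReidSuzuki.curveIdeal K).map (Ideal.Quotient.mk I) := by
    simp only [hID, ReidSuzuki.curveIdeal, Ideal.map_span, Set.image_insert_eq,
      Set.image_singleton]
  have : (ReidSuzuki.curveIdeal K).IsPrime := ReidSuzuki.ker_curveParam K ▸ RingHom.ker_isPrime _
  rw [hID_map]
  exact Ideal.map_isPrime_of_surjective Ideal.Quotient.mk_surjective (by rwa [Ideal.mk_ker])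
end
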